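/- Let h(U,V) = ‖X − UV‖_F². On the set where UᵀU = I and every column of V is a unit vector, the operator norm of the Hessian of h is bounded by L_c := 2(r + n + √(rn) + ‖X‖_F). Consequently, h has L_c-Lipschitz continuous gradient on this set. -/
import Mathlib


open Matrix BigOperators

/-- Frobenius squared norm. -/
noncomputable def frobSq {m n : ℕ} (A : Matrix (Fin m) (Fin n) ℝ) : ℝ :=
  ∑ i, ∑ j, A i j ^ 2

/-- Frobenius inner product. -/
noncomputable def frobInner {m n : ℕ} (A B : Matrix (Fin m) (Fin n) ℝ) : ℝ :=
  ∑ i, ∑ j, A i j * B i j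

namespace FrobAux

lemma frobSq_nonneg {m n : ℕ} (A : Matrix (Fin m) (Fin n) ℝ) : 0 ≤ frobSq A :=
  Finset.sum_nonneg fun _ _ => Finset.sum_nonneg fun _ _ => sq_nonneg _

lemma frobInner_flat {m n : ℕ} (A B : Matrix (Fin m) (Fin n) ℝ) :
    frobInner A B = ∑ p : Fin m × Fin n, A p.1 p.2 * B p.1 p.2 := by
  rw [frobInner, Fintype.sum_prod_type]

lemma frobSq_flat {m n : ℕ} (A : Matrix (Fin m) (Fin n) ℝ) :
    frobSq A = ∑ p : Fin m × Fin n, A p.1 p.2 ^ 2 := by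
  rw [frobSq, Fintype.sum_prod_type]

lemma frobInner_sq_le {m n : ℕ} (A B : Matrix (Fin m) (Fin n) ℝ) :
    frobInner A B ^ 2 ≤ frobSq A * frobSq B := by
  rw [frobInner_flat, frobSq_flat, frobSq_flat]
  exact Finset.sum_mul_sq_le_sq_mul_sq _ _ _

lemma abs_frobInner_le {m n : ℕ} (A B : Matrix (Fin m) (Fin n) ℝ) :
    |frobInner A B| ≤ Real.sqrt (frobSq A) * Real.sqrt (frobSq B) := by
  rw [← Real.sqrt_sq_eq_abs, ← Real.sqrt_mul (frobSq_nonneg A)]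
  exact Real.sqrt_le_sqrt (frobInner_sq_le A B)

lemma frobInner_le {m n : ℕ} (A B : Matrix (Fin m) (Fin n) ℝ) :
    frobInner A B ≤ Real.sqrt (frobSq A) * Real.sqrt (frobSq B) :=
  (le_abs_self _).trans (abs_frobInner_le A B)

lemma frobSq_mul_le {m k n : ℕ} (A : Matrix (Fin m) (Fin k) ℝ) (B : Matrix (Fin k) (Fin n) ℝ) :
    frobSq (A * B) ≤ frobSq A * frobSq B := by
  have h1 : ∀ i j, (A * B) i j ^ 2 ≤ (∑ l, A i l ^ 2) * (∑ l, B l j ^ 2) := by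
    intro i j
    rw [Matrix.mul_apply]
    exact Finset.sum_mul_sq_le_sq_mul_sq _ _ _
  calc frobSq (A * B) ≤ ∑ i, ∑ j, (∑ l, A i l ^ 2) * (∑ l, B l j ^ 2) := by
        apply Finset.sum_le_sum; intro i _
        exact Finset.sum_le_sum fun j _ => h1 i j
    _ = (∑ i, ∑ l, A i l ^ 2) * (∑ j, ∑ l, B l j ^ 2) := by
        rw [← Finset.sum_mul_sum]
    _ = frobSq A * frobSq B := by
        rw [frobSq, frobSq]; congr 1; rw [Finset.sum_comm]

lemma frobSq_eq_trace {m n : ℕ} (A : Matrix (Fin m) (Fin n) ℝ) :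
    frobSq A = Matrix.trace (Aᵀ * A) := by
  rw [Matrix.trace]
  simp only [Matrix.diag_apply, Matrix.mul_apply, Matrix.transpose_apply]
  rw [frobSq, Finset.sum_comm]
  simp [sq]

lemma frobSq_ortho {m r n : ℕ} {U : Matrix (Fin m) (Fin r) ℝ} (hU : Uᵀ * U = 1)
    (A : Matrix (Fin r) (Fin n) ℝ) : frobSq (U * A) = frobSq A := by
  rw [frobSq_eq_trace, frobSq_eq_trace, Matrix.transpose_mul, Matrix.mul_assoc,
    ← Matrix.mul_assoc Uᵀ U A, hU, Matrix.one_mul]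

lemma frobSq_transpose {m n : ℕ} (A : Matrix (Fin m) (Fin n) ℝ) :
    frobSq Aᵀ = frobSq A := by
  rw [frobSq, frobSq, Finset.sum_comm]
  rfl

lemma frobSq_neg {m n : ℕ} (A : Matrix (Fin m) (Fin n) ℝ) : frobSq (-A) = frobSq A := by
  simp [frobSq]

lemma frobSq_add {m n : ℕ} (A B : Matrix (Fin m) (Fin n) ℝ) :
    frobSq (A + B) = frobSq A + 2 * frobInner A B + frobSq B := by
  simp only [frobSq, frobInner, Matrix.add_apply, add_sq, Finset.sum_add_distrib,
    Finset.mul_sum]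
  ring

lemma frobSq_smul2 {m n : ℕ} (A : Matrix (Fin m) (Fin n) ℝ) :
    frobSq ((2:ℝ) • A) = 4 * frobSq A := by
  simp only [frobSq, Matrix.smul_apply, smul_eq_mul, mul_pow, Finset.mul_sum]
  norm_num

lemma normF_add_le {m n : ℕ} (A B : Matrix (Fin m) (Fin n) ℝ) :
    Real.sqrt (frobSq (A + B)) ≤ Real.sqrt (frobSq A) + Real.sqrt (frobSq B) := by
  have h : frobSq (A + B) ≤ (Real.sqrt (frobSq A) + Real.sqrt (frobSq B)) ^ 2 := by
    rw [frobSq_add, add_sq, Real.sq_sqrt (frobSq_nonneg A), Real.sq_sqrt (frobSq_nonneg B)]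
    have := frobInner_le A B
    nlinarith
  calc Real.sqrt (frobSq (A + B)) ≤ Real.sqrt ((Real.sqrt (frobSq A) + Real.sqrt (frobSq B)) ^ 2) :=
        Real.sqrt_le_sqrt h
    _ = _ := Real.sqrt_sq (by positivity)

lemma normF_mul_le {m k n : ℕ} (A : Matrix (Fin m) (Fin k) ℝ) (B : Matrix (Fin k) (Fin n) ℝ) :
    Real.sqrt (frobSq (A * B)) ≤ Real.sqrt (frobSq A) * Real.sqrt (frobSq B) := by
  rw [← Real.sqrt_mul (frobSq_nonneg A)]
  exact Real.sqrt_le_sqrt (frobSq_mul_le A B)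

lemma pair_tri {m n p q : ℕ} (A B : Matrix (Fin m) (Fin n) ℝ) (C D : Matrix (Fin p) (Fin q) ℝ) :
    Real.sqrt (frobSq (A + B) + frobSq (C + D)) ≤
      Real.sqrt (frobSq A + frobSq C) + Real.sqrt (frobSq B + frobSq D) := by
  set a := Real.sqrt (frobSq A + frobSq C) with ha
  set b := Real.sqrt (frobSq B + frobSq D) with hb
  have ha0 : 0 ≤ a := Real.sqrt_nonneg _
  have hb0 : 0 ≤ b := Real.sqrt_nonneg _
  have ha2 : a ^ 2 = frobSq A + frobSq C :=
    Real.sq_sqrt (add_nonneg (frobSq_nonneg _) (frobSq_nonneg _))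
  have hb2 : b ^ 2 = frobSq B + frobSq D :=
    Real.sq_sqrt (add_nonneg (frobSq_nonneg _) (frobSq_nonneg _))
  have hAB := frobInner_le A B
  have hCD := frobInner_le C D
  have hnA : 0 ≤ Real.sqrt (frobSq A) := Real.sqrt_nonneg _
  have hnB : 0 ≤ Real.sqrt (frobSq B) := Real.sqrt_nonneg _
  have hnC : 0 ≤ Real.sqrt (frobSq C) := Real.sqrt_nonneg _
  have hnD : 0 ≤ Real.sqrt (frobSq D) := Real.sqrt_nonneg _
  have hsA : Real.sqrt (frobSq A) ^ 2 = frobSq A := Real.sq_sqrt (frobSq_nonneg _)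
  have hsB : Real.sqrt (frobSq B) ^ 2 = frobSq B := Real.sq_sqrt (frobSq_nonneg _)
  have hsC : Real.sqrt (frobSq C) ^ 2 = frobSq C := Real.sq_sqrt (frobSq_nonneg _)
  have hsD : Real.sqrt (frobSq D) ^ 2 = frobSq D := Real.sq_sqrt (frobSq_nonneg _)
  have key : Real.sqrt (frobSq A) * Real.sqrt (frobSq B)
      + Real.sqrt (frobSq C) * Real.sqrt (frobSq D) ≤ a * b := by
    have h2 : (Real.sqrt (frobSq A) * Real.sqrt (frobSq B)
        + Real.sqrt (frobSq C) * Real.sqrt (frobSq D)) ^ 2 ≤ (a * b) ^ 2 := by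
      rw [mul_pow, ha2, hb2]
      nlinarith [sq_nonneg (Real.sqrt (frobSq A) * Real.sqrt (frobSq D)
        - Real.sqrt (frobSq C) * Real.sqrt (frobSq B))]
    have hpos : 0 ≤ Real.sqrt (frobSq A) * Real.sqrt (frobSq B)
        + Real.sqrt (frobSq C) * Real.sqrt (frobSq D) := by positivity
    nlinarith [mul_nonneg ha0 hb0]
  have h : frobSq (A + B) + frobSq (C + D) ≤ (a + b) ^ 2 := by
    rw [frobSq_add, frobSq_add, add_sq, ha2, hb2]
    nlinarith [hAB, hCD, key]
  calc Real.sqrt (frobSq (A + B) + frobSq (C + D)) ≤ Real.sqrt ((a + b) ^ 2) :=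
        Real.sqrt_le_sqrt h
    _ = a + b := Real.sqrt_sq (by positivity)

end FrobAux

lemma keyineq (a b q ρ w : ℝ) (ha : 0 ≤ a) (hb : 0 ≤ b) (hq : 0 ≤ q)
    (hρ : 1 ≤ ρ) (hqw : q ≤ w) (hw : 0 ≤ w) :
    (a * q ^ 2 + 2 * (q * b)) ^ 2 + b ^ 2 ≤ (q ^ 2 + ρ + w) ^ 2 * (a ^ 2 + b ^ 2) := by
  have h1 : (q ^ 2 + 1 + q) ^ 2 ≤ (q ^ 2 + ρ + w) ^ 2 := by nlinarith [sq_nonneg q]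
  have h2 : (a * q ^ 2 + 2 * (q * b)) ^ 2 + b ^ 2 ≤ (q ^ 2 + 1 + q) ^ 2 * (a ^ 2 + b ^ 2) := by
    nlinarith [mul_nonneg (mul_nonneg hq (mul_nonneg hq hq)) (sq_nonneg (a - b)),
      mul_nonneg (mul_nonneg (mul_nonneg hq (sq_nonneg (q - 1))) (by linarith : (0:ℝ) ≤ q + 2))
        (sq_nonneg b),
      sq_nonneg a, sq_nonneg b, sq_nonneg q, mul_nonneg hq hb, mul_nonneg ha hb,
      mul_nonneg (sq_nonneg a) (sq_nonneg q), mul_nonneg (sq_nonneg a) hq,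
      mul_nonneg (sq_nonneg b) (sq_nonneg q), mul_nonneg (sq_nonneg b) hq]
  calc (a * q ^ 2 + 2 * (q * b)) ^ 2 + b ^ 2 ≤ (q ^ 2 + 1 + q) ^ 2 * (a ^ 2 + b ^ 2) := h2
    _ ≤ (q ^ 2 + ρ + w) ^ 2 * (a ^ 2 + b ^ 2) :=
        mul_le_mul_of_nonneg_right h1 (by positivity)

open FrobAux

set_option maxHeartbeats 2000000 in
/-- On the set where UᵀU = I and every column of V is a unit
vector, the Hessian quadratic form of h(U,V) = ‖X − UV‖_F² on unit-norm
perturbations is bounded by L_c := 2(r + n + √(rn) + ‖X‖_F); consequently the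
gradient ∇h = (2(UV−X)Vᵀ, 2Uᵀ(UV−X)) is L_c-Lipschitz on this set. -/
theorem hessian_bound_and_lipschitz (m n r : ℕ) (X : Matrix (Fin m) (Fin n) ℝ) :
    (∀ (U : Matrix (Fin m) (Fin r) ℝ) (V : Matrix (Fin r) (Fin n) ℝ),
      Uᵀ * U = 1 → (∀ j, ∑ i, V i j ^ 2 = 1) →
      ∀ (DU : Matrix (Fin m) (Fin r) ℝ) (DV : Matrix (Fin r) (Fin n) ℝ),
        frobSq DU + frobSq DV = 1 →
        |2 * frobSq (DU * V + U * DV) + 4 * frobInner (U * V - X) (DU * DV)|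
          ≤ 2 * ((r : ℝ) + n + Real.sqrt (r * n) + Real.sqrt (frobSq X))) ∧
    (∀ (U U' : Matrix (Fin m) (Fin r) ℝ) (V V' : Matrix (Fin r) (Fin n) ℝ),
      Uᵀ * U = 1 → U'ᵀ * U' = 1 →
      (∀ j, ∑ i, V i j ^ 2 = 1) → (∀ j, ∑ i, V' i j ^ 2 = 1) →
      Real.sqrt (frobSq ((2 : ℝ) • ((U * V - X) * Vᵀ) - (2 : ℝ) • ((U' * V' - X) * V'ᵀ))
          + frobSq ((2 : ℝ) • (Uᵀ * (U * V - X)) - (2 : ℝ) • (U'ᵀ * (U' * V' - X))))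
        ≤ 2 * ((r : ℝ) + n + Real.sqrt (r * n) + Real.sqrt (frobSq X)) *
            Real.sqrt (frobSq (U - U') + frobSq (V - V'))) := by
  have hx0 : 0 ≤ Real.sqrt (frobSq X) := Real.sqrt_nonneg _
  have hq0 : 0 ≤ Real.sqrt (n : ℝ) := Real.sqrt_nonneg _
  have hw0 : 0 ≤ Real.sqrt ((r : ℝ) * n) := Real.sqrt_nonneg _
  have hq2 : Real.sqrt (n : ℝ) ^ 2 = (n : ℝ) := Real.sq_sqrt (Nat.cast_nonneg n)
  constructor
  · -- Part 1: Hessian quadratic form bound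
    intro U V hU hVc DU DV hD
    rcases Nat.eq_zero_or_pos r with hr | hr
    · exfalso
      subst hr
      have h1 : frobSq DU = 0 := by simp [frobSq]
      have h2 : frobSq DV = 0 := by simp [frobSq]
      rw [h1, h2] at hD
      norm_num at hD
    have hr1 : (1 : ℝ) ≤ (r : ℝ) := by exact_mod_cast hr
    have hqw : Real.sqrt (n : ℝ) ≤ Real.sqrt ((r : ℝ) * n) := by
      apply Real.sqrt_le_sqrt
      nlinarith [Nat.cast_nonneg (α := ℝ) n]
    have hfV : frobSq V = (n : ℝ) := by
      rw [frobSq, Finset.sum_comm]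
      simp [hVc]
    set s := frobSq DU with hs
    set t := frobSq DV with ht
    have hs0 : 0 ≤ s := frobSq_nonneg DU
    have ht0 : 0 ≤ t := frobSq_nonneg DV
    set a := Real.sqrt s with ha
    set b := Real.sqrt t with hb
    have ha0 : 0 ≤ a := Real.sqrt_nonneg _
    have hb0 : 0 ≤ b := Real.sqrt_nonneg _
    have ha2 : a ^ 2 = s := Real.sq_sqrt hs0
    have hb2 : b ^ 2 = t := Real.sq_sqrt ht0
    set q := Real.sqrt (n : ℝ) with hqdef
    set w := Real.sqrt ((r : ℝ) * n) with hwdef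
    set x := Real.sqrt (frobSq X) with hxdef
    have h1 : frobSq (DU * V) ≤ s * (n : ℝ) := by
      have := frobSq_mul_le DU V
      rw [hfV] at this
      exact this
    have h2 : frobSq (U * DV) = t := frobSq_ortho hU DV
    have hn1 : Real.sqrt (frobSq (DU * V)) ≤ a * q := by
      rw [ha, hqdef, ← Real.sqrt_mul hs0]
      exact Real.sqrt_le_sqrt h1
    have hn2 : Real.sqrt (frobSq (U * DV)) = b := by rw [h2]
    have h3 : frobInner (DU * V) (U * DV) ≤ a * q * b := by
      calc frobInner (DU * V) (U * DV)
          ≤ Real.sqrt (frobSq (DU * V)) * Real.sqrt (frobSq (U * DV)) := frobInner_le _ _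
        _ ≤ a * q * b := by
            rw [hn2]
            exact mul_le_mul_of_nonneg_right hn1 hb0
    have hF : frobSq (DU * V + U * DV) ≤ s * (n : ℝ) + 2 * (a * q * b) + t := by
      rw [frobSq_add]
      linarith
    have hUV : Real.sqrt (frobSq (U * V)) = q := by
      rw [frobSq_ortho hU V, hfV]
    have hUVX : Real.sqrt (frobSq (U * V - X)) ≤ q + x := by
      have h := normF_add_le (U * V) (-X)
      rw [frobSq_neg, ← sub_eq_add_neg, hUV] at h
      exact h
    have hDD : Real.sqrt (frobSq (DU * DV)) ≤ a * b := by
      rw [ha, hb, ← Real.sqrt_mul hs0]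
      exact Real.sqrt_le_sqrt (frobSq_mul_le DU DV)
    have hI : |frobInner (U * V - X) (DU * DV)| ≤ (q + x) * (a * b) := by
      calc |frobInner (U * V - X) (DU * DV)|
          ≤ Real.sqrt (frobSq (U * V - X)) * Real.sqrt (frobSq (DU * DV)) :=
            abs_frobInner_le _ _
        _ ≤ (q + x) * (a * b) :=
            mul_le_mul hUVX hDD (Real.sqrt_nonneg _) (by positivity)
    have habs : |2 * frobSq (DU * V + U * DV) + 4 * frobInner (U * V - X) (DU * DV)|
        ≤ 2 * frobSq (DU * V + U * DV) + 4 * |frobInner (U * V - X) (DU * DV)| := by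
      calc |2 * frobSq (DU * V + U * DV) + 4 * frobInner (U * V - X) (DU * DV)|
          ≤ |2 * frobSq (DU * V + U * DV)| + |4 * frobInner (U * V - X) (DU * DV)| :=
            abs_add_le _ _
        _ = 2 * frobSq (DU * V + U * DV) + 4 * |frobInner (U * V - X) (DU * DV)| := by
            rw [abs_of_nonneg (mul_nonneg (by norm_num) (frobSq_nonneg _)), abs_mul]
            norm_num
    clear_value s t a b q w x
    refine habs.trans ?_
    have hnst : (n : ℝ) * s + (n : ℝ) * t = (n : ℝ) := by
      rw [← mul_add, hD, mul_one]
    have e1 : 2 * (q * (a * b)) ≤ s + (n : ℝ) * t := by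
      nlinarith [sq_nonneg (a - q * b)]
    have e2 : 2 * (x * (a * b)) ≤ x := by
      nlinarith [mul_nonneg hx0 (sq_nonneg (a - b))]
    have e3 : 4 * (q * (a * b)) ≤ 2 * w := by
      nlinarith [mul_nonneg (sub_nonneg.2 hqw) (mul_nonneg ha0 hb0),
        mul_nonneg hw0 (sq_nonneg (a - b))]
    have hI' : |frobInner (U * V - X) (DU * DV)| ≤ q * (a * b) + x * (a * b) := by
      nlinarith [hI]
    nlinarith [hF, hI', e1, e2, e3, hnst]
  · -- Part 2: Lipschitz gradient
    intro U U' V V' hU hU' hVc hVc'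
    rcases Nat.eq_zero_or_pos n with hn | hn
    · subst hn
      have h1 : frobSq ((2 : ℝ) • ((U * V - X) * Vᵀ) - (2 : ℝ) • ((U' * V' - X) * V'ᵀ)) = 0 := by
        simp [frobSq, Matrix.mul_apply]
      have h2 : frobSq ((2 : ℝ) • (Uᵀ * (U * V - X)) - (2 : ℝ) • (U'ᵀ * (U' * V' - X))) = 0 := by
        simp [frobSq]
      rw [h1, h2]
      simp only [add_zero, Real.sqrt_zero]
      positivity
    rcases Nat.eq_zero_or_pos r with hr | hr
    · exfalso
      subst hr
      simpa using hVc ⟨0, hn⟩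
    have hr1 : (1 : ℝ) ≤ (r : ℝ) := by exact_mod_cast hr
    have hqw : Real.sqrt (n : ℝ) ≤ Real.sqrt ((r : ℝ) * n) := by
      apply Real.sqrt_le_sqrt
      nlinarith [Nat.cast_nonneg (α := ℝ) n]
    have hfV : frobSq V = (n : ℝ) := by
      rw [frobSq, Finset.sum_comm]; simp [hVc]
    have hfV' : frobSq V' = (n : ℝ) := by
      rw [frobSq, Finset.sum_comm]; simp [hVc']
    set ΔU := U - U' with hΔU
    set ΔV := V - V' with hΔV
    have hId1 : (U * V - X) * Vᵀ - (U' * V' - X) * V'ᵀ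
        = (ΔU * (V * Vᵀ) + U' * (ΔV * Vᵀ) + U' * (V' * ΔVᵀ)) + (-(X * ΔVᵀ)) := by
      rw [hΔU, hΔV]
      simp only [Matrix.sub_mul, Matrix.mul_sub, Matrix.transpose_sub, Matrix.mul_assoc]
      abel
    have hId2 : Uᵀ * (U * V - X) - U'ᵀ * (U' * V' - X) = ΔV + (-(ΔUᵀ * X)) := by
      rw [hΔU, hΔV]
      simp only [Matrix.mul_sub, Matrix.sub_mul, Matrix.transpose_sub, ← Matrix.mul_assoc,
        hU, hU', Matrix.one_mul]
      abel
    rw [← smul_sub, ← smul_sub, hId1, hId2, frobSq_smul2, frobSq_smul2]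
    have h4 : 4 * frobSq ((ΔU * (V * Vᵀ) + U' * (ΔV * Vᵀ) + U' * (V' * ΔVᵀ)) + (-(X * ΔVᵀ)))
        + 4 * frobSq (ΔV + (-(ΔUᵀ * X)))
        = 4 * (frobSq ((ΔU * (V * Vᵀ) + U' * (ΔV * Vᵀ) + U' * (V' * ΔVᵀ)) + (-(X * ΔVᵀ)))
            + frobSq (ΔV + (-(ΔUᵀ * X)))) := by ring
    rw [h4, show (4 : ℝ) = 2 ^ 2 by norm_num, Real.sqrt_mul (by positivity) _,
      Real.sqrt_sq (by norm_num : (0 : ℝ) ≤ 2)]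
    set cu := frobSq ΔU with hcu
    set cv := frobSq ΔV with hcv
    have hcu0 : 0 ≤ cu := frobSq_nonneg ΔU
    have hcv0 : 0 ≤ cv := frobSq_nonneg ΔV
    set a := Real.sqrt cu with hadef
    set b := Real.sqrt cv with hbdef
    have ha0 : 0 ≤ a := Real.sqrt_nonneg _
    have hb0 : 0 ≤ b := Real.sqrt_nonneg _
    have ha2 : a ^ 2 = cu := Real.sq_sqrt hcu0
    have hb2 : b ^ 2 = cv := Real.sq_sqrt hcv0
    set q := Real.sqrt (n : ℝ) with hqdef
    set w := Real.sqrt ((r : ℝ) * n) with hwdef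
    set x := Real.sqrt (frobSq X) with hxdef
    set D := Real.sqrt (cu + cv) with hDdef
    have hD0 : 0 ≤ D := Real.sqrt_nonneg _
    have hD2 : D ^ 2 = cu + cv := Real.sq_sqrt (by linarith)
    -- bound for the X part
    have hB : Real.sqrt (frobSq (-(X * ΔVᵀ)) + frobSq (-(ΔUᵀ * X))) ≤ x * D := by
      rw [frobSq_neg, frobSq_neg]
      have e1 : frobSq (X * ΔVᵀ) ≤ frobSq X * cv := by
        have h := frobSq_mul_le X ΔVᵀ
        rwa [frobSq_transpose] at h
      have e2 : frobSq (ΔUᵀ * X) ≤ frobSq X * cu := by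
        have h := frobSq_mul_le ΔUᵀ X
        rw [frobSq_transpose] at h
        linarith [h, mul_comm cu (frobSq X) ▸ h]
      calc Real.sqrt (frobSq (X * ΔVᵀ) + frobSq (ΔUᵀ * X))
          ≤ Real.sqrt (frobSq X * (cu + cv)) := by
            apply Real.sqrt_le_sqrt
            nlinarith
        _ = x * D := Real.sqrt_mul (frobSq_nonneg X) _
    -- bound for the main part
    have hVV : Real.sqrt (frobSq (V * Vᵀ)) ≤ (n : ℝ) := by
      have h := frobSq_mul_le V Vᵀ
      rw [frobSq_transpose, hfV] at h
      calc Real.sqrt (frobSq (V * Vᵀ)) ≤ Real.sqrt ((n : ℝ) * n) := Real.sqrt_le_sqrt h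
        _ = (n : ℝ) := Real.sqrt_mul_self (Nat.cast_nonneg n)
    have hT1 : Real.sqrt (frobSq (ΔU * (V * Vᵀ))) ≤ a * (n : ℝ) :=
      (normF_mul_le _ _).trans (mul_le_mul_of_nonneg_left hVV ha0)
    have hT2 : Real.sqrt (frobSq (U' * (ΔV * Vᵀ))) ≤ b * q := by
      rw [frobSq_ortho hU']
      have h := frobSq_mul_le ΔV Vᵀ
      rw [frobSq_transpose, hfV] at h
      calc Real.sqrt (frobSq (ΔV * Vᵀ)) ≤ Real.sqrt (cv * n) := Real.sqrt_le_sqrt h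
        _ = b * q := Real.sqrt_mul hcv0 _
    have hT3 : Real.sqrt (frobSq (U' * (V' * ΔVᵀ))) ≤ q * b := by
      rw [frobSq_ortho hU']
      have h := frobSq_mul_le V' ΔVᵀ
      rw [frobSq_transpose, hfV'] at h
      calc Real.sqrt (frobSq (V' * ΔVᵀ)) ≤ Real.sqrt ((n : ℝ) * cv) := Real.sqrt_le_sqrt h
        _ = q * b := Real.sqrt_mul (Nat.cast_nonneg n) _
    have hA1 : Real.sqrt (frobSq (ΔU * (V * Vᵀ) + U' * (ΔV * Vᵀ) + U' * (V' * ΔVᵀ)))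
        ≤ a * (n : ℝ) + b * q + q * b := by
      calc Real.sqrt (frobSq (ΔU * (V * Vᵀ) + U' * (ΔV * Vᵀ) + U' * (V' * ΔVᵀ)))
          ≤ Real.sqrt (frobSq (ΔU * (V * Vᵀ) + U' * (ΔV * Vᵀ)))
              + Real.sqrt (frobSq (U' * (V' * ΔVᵀ))) := normF_add_le _ _
        _ ≤ (Real.sqrt (frobSq (ΔU * (V * Vᵀ))) + Real.sqrt (frobSq (U' * (ΔV * Vᵀ))))
              + Real.sqrt (frobSq (U' * (V' * ΔVᵀ))) := by
            have := normF_add_le (ΔU * (V * Vᵀ)) (U' * (ΔV * Vᵀ))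
            linarith
        _ ≤ a * (n : ℝ) + b * q + q * b := by linarith
    have hA1sq : frobSq (ΔU * (V * Vᵀ) + U' * (ΔV * Vᵀ) + U' * (V' * ΔVᵀ))
        ≤ (a * (n : ℝ) + b * q + q * b) ^ 2 := by
      have h0 := Real.sqrt_nonneg (frobSq (ΔU * (V * Vᵀ) + U' * (ΔV * Vᵀ) + U' * (V' * ΔVᵀ)))
      have heq := Real.sq_sqrt (frobSq_nonneg (ΔU * (V * Vᵀ) + U' * (ΔV * Vᵀ) + U' * (V' * ΔVᵀ)))
      nlinarith [hA1]
    have hkey := keyineq a b q (r : ℝ) w ha0 hb0 hq0 hr1 hqw hw0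
    have hApair : Real.sqrt (frobSq (ΔU * (V * Vᵀ) + U' * (ΔV * Vᵀ) + U' * (V' * ΔVᵀ)) + cv)
        ≤ ((n : ℝ) + r + w) * D := by
      have heqn : (a * (n : ℝ) + b * q + q * b) ^ 2 = (a * q ^ 2 + 2 * (q * b)) ^ 2 := by
        rw [hq2]; ring
      have heqn2 : ((n : ℝ) + r + w) ^ 2 = (q ^ 2 + r + w) ^ 2 := by rw [hq2]
      have hsq : frobSq (ΔU * (V * Vᵀ) + U' * (ΔV * Vᵀ) + U' * (V' * ΔVᵀ)) + cv
          ≤ (((n : ℝ) + r + w) * D) ^ 2 := by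
        rw [mul_pow, hD2, heqn2]
        rw [ha2, hb2] at hkey
        rw [heqn] at hA1sq
        linarith
      calc Real.sqrt (frobSq (ΔU * (V * Vᵀ) + U' * (ΔV * Vᵀ) + U' * (V' * ΔVᵀ)) + cv)
          ≤ Real.sqrt ((((n : ℝ) + r + w) * D) ^ 2) := Real.sqrt_le_sqrt hsq
        _ = ((n : ℝ) + r + w) * D := Real.sqrt_sq (by positivity)
    have htri := pair_tri (ΔU * (V * Vᵀ) + U' * (ΔV * Vᵀ) + U' * (V' * ΔVᵀ)) (-(X * ΔVᵀ))
      ΔV (-(ΔUᵀ * X))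
    have hfin : 2 * (((n : ℝ) + r + w) * D + x * D)
        = 2 * ((r : ℝ) + n + w + x) * D := by ring
    rw [← hcv] at htri
    clear_value cu cv a b q w x D
    nlinarith [htri, hApair, hB, hD0]
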